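/- Interpretation of the 2SLS estimands under one-sided noncompliance: suppose β₀, β₁, β₂, β₃ ∈ ℝ satisfy, for every (z,z') ∈ {0,1}², E[Y | Z_i=z, Z_j=z'] = β₀ + β₁·E[D_i | Z_i=z, Z_j=z'] + β₂·E[D_j | Z_i=z, Z_j=z'] + β₃·E[D_i·D_j | Z_i=z, Z_j=z'] (the population moment conditions of the 2SLS regression of Y on (D_i, D_j, D_i·D_j) with instruments (Z_i, Z_j, Z_i·Z_j)). Then under Assumptions 1, 2 and 4, if P[C_i] > 0 and P[C_j] > 0, it holds that β₀ = E[Y(0,0)], β₁ = E[Y(1,0) − Y(0,0) | C_i], and β₂ = E[Y(0,1) − Y(0,0) | C_j]. -/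

import Mathlib

/-!
Independence of the instruments makes the law of the potential variables the same in every
instrument cell, so each cell's moment condition becomes an identity between unconditional
expectations of potential quantities. One-sided noncompliance switches off both treatments in
cell (0,0), which gives β₀ = E[Y(0,0)], and switches off j's (resp. i's) treatment in cell (1,0)
(resp. (0,1)), leaving E[Y(D_i(1,0), 0)] = β₀ + β₁ P[D_i(1,0) = 1]. Since the compliers of i are
a.s. the event {D_i(1,0) = 1}, this is the Wald ratio β₁ = E[Y(1,0) - Y(0,0) | C_i].
-/

open MeasureTheory ProbabilityTheory

noncomputable def bInd (b : Bool) : ℝ := if b then 1 else 0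

@[fun_prop]
lemma measurable_bInd : Measurable bInd := measurable_of_countable _

lemma Measurable.apply_apply_of_countable {α ι κ γ : Type*} [MeasurableSpace α]
    [MeasurableSpace ι] [MeasurableSpace κ] [MeasurableSpace γ] [Countable ι] [Countable κ]
    [MeasurableSingletonClass ι] [MeasurableSingletonClass κ] {f : α → ι → κ → γ} {i : α → ι}
    {k : α → κ} (hf : Measurable f) (hi : Measurable i) (hk : Measurable k) :
    Measurable fun a => f a (i a) (k a) :=
  (measurable_from_prod_countable_right (f := fun q : (ι × κ) × (ι → κ → γ) => q.2 q.1.1 q.1.2)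
    fun x => (measurable_pi_apply x.2).comp (measurable_pi_apply x.1)).comp
    ((hi.prodMk hk).prodMk hf)

section

variable {Ω : Type*} [MeasurableSpace Ω]

lemma integral_bInd {μ : Measure Ω} {D : Ω → Bool} (hD : Measurable D) :
    ∫ ω, bInd (D ω) ∂μ = μ.real {ω | D ω = true} := by
  have hs : MeasurableSet {ω | D ω = true} := hD (measurableSet_singleton true)
  rw [← integral_indicator_one hs]
  congr 1 with ω
  by_cases h : D ω = true <;> simp [bInd, h]

lemma integral_cond_eq_inv_mul_setIntegral {μ : Measure Ω} (s : Set Ω) (f : Ω → ℝ) :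
    ∫ ω, f ω ∂μ[|s] = (μ.real s)⁻¹ * ∫ ω in s, f ω ∂μ := by
  rw [ProbabilityTheory.cond, integral_smul_measure, ENNReal.toReal_inv, smul_eq_mul,
    measureReal_def]

lemma ProbabilityTheory.cond_congr_ae {μ : Measure Ω} {s t : Set Ω} (h : s =ᵐ[μ] t) :
    μ[|s] = μ[|t] := by
  rw [ProbabilityTheory.cond, ProbabilityTheory.cond, measure_congr h,
    Measure.restrict_congr_set h]

lemma ProbabilityTheory.IndepFun.map_cond_preimage {α β : Type*}
    [MeasurableSpace α] [MeasurableSpace β] {P : Measure Ω} [IsFiniteMeasure P]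
    {X : Ω → α} {Z : Ω → β} (hXZ : IndepFun X Z P) (hX : Measurable X) (hZ : Measurable Z)
    {s : Set β} (hs : MeasurableSet s) (hs0 : P (Z ⁻¹' s) ≠ 0) :
    (P[|Z ⁻¹' s]).map X = P.map X := by
  ext t ht
  rw [Measure.map_apply hX ht, Measure.map_apply hX ht, cond_apply (hZ hs), Set.inter_comm,
    hXZ.measure_inter_preimage_eq_mul _ _ ht hs, mul_comm,
    ENNReal.mul_inv_cancel_right hs0 (measure_ne_top _ _)]

lemma ProbabilityTheory.IndepFun.integral_comp_cond_preimage_singleton {α β : Type*}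
    [MeasurableSpace α] [MeasurableSpace β] [MeasurableSingletonClass β]
    {P : Measure Ω} [IsFiniteMeasure P]
    {X : Ω → α} {Z : Ω → β} (hXZ : IndepFun X Z P) (hX : Measurable X) (hZ : Measurable Z)
    {b : β} (hb : P (Z ⁻¹' {b}) ≠ 0) (Φ : β → α → ℝ) (hΦ : Measurable (Φ b)) :
    ∫ ω, Φ (Z ω) (X ω) ∂P[|Z ⁻¹' {b}] = ∫ ω, Φ b (X ω) ∂P := by
  calc ∫ ω, Φ (Z ω) (X ω) ∂P[|Z ⁻¹' {b}] = ∫ ω, Φ b (X ω) ∂P[|Z ⁻¹' {b}] :=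
        integral_congr_ae <| (ae_cond_mem (hZ (measurableSet_singleton b))).mono
          fun ω (hω : Z ω = b) => by simp only [hω]
    _ = ∫ a, Φ b a ∂(P[|Z ⁻¹' {b}]).map X :=
        (integral_map hX.aemeasurable hΦ.aestronglyMeasurable).symm
    _ = ∫ ω, Φ b (X ω) ∂P := by
        rw [hXZ.map_cond_preimage hX hZ (measurableSet_singleton b) hb,
          integral_map hX.aemeasurable hΦ.aestronglyMeasurable]

lemma setOf_and_eq_false_ae_eq {μ : Measure Ω} {D D' : Ω → Bool} (hD' : D' =ᵐ[μ] fun _ => false) :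
    {ω | D ω = true ∧ D' ω = false} =ᵐ[μ] {ω | D ω = true} := by
  rw [Filter.eventuallyEq_set]
  filter_upwards [hD'] with ω hω
  simp [hω]

lemma eq_integral_cond_sub_of_integral_eq {μ : Measure Ω} [IsFiniteMeasure μ] {Y : Bool → Ω → ℝ} (hY : ∀ d, Integrable (Y d) μ) {D : Ω → Bool}
    (hD : Measurable D) (hD0 : μ {ω | D ω = true} ≠ 0) {b : ℝ}
    (h : ∫ ω, Y (D ω) ω ∂μ = ∫ ω, Y false ω ∂μ + b * ∫ ω, bInd (D ω) ∂μ) :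
    b = ∫ ω, (Y true ω - Y false ω) ∂μ[|{ω | D ω = true}] := by
  rw [integral_bInd hD] at h
  set s := {ω | D ω = true}
  have hs : MeasurableSet s := hD (measurableSet_singleton true)
  have hsplit : (fun ω => Y (D ω) ω)
      = fun ω => Y false ω + s.indicator (Y true - Y false) ω := by
    funext ω
    cases hω : D ω <;> simp [s, hω]
  have hs0 : μ.real s ≠ 0 := (measureReal_ne_zero_iff (measure_ne_top μ s)).mpr hD0
  rw [hsplit, integral_add (hY false) (((hY true).sub (hY false)).indicator hs),
    integral_indicator hs, add_right_inj] at h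
  simp only [Pi.sub_apply] at h
  rw [integral_cond_eq_inv_mul_setIntegral, h]
  field_simp

end

/-- The 2SLS moment condition `E[Y] = β₀ + β₁ E[D_i] + β₂ E[D_j] + β₃ E[D_i D_j]` under `μ`,
with `D`, `D'` the treatments of `i` and `j`. -/
def MomentCondition {Ω : Type*} [MeasurableSpace Ω] (μ : Measure Ω) (Y : Bool → Bool → Ω → ℝ)
    (D D' : Ω → Bool) (b0 b1 b2 b3 : ℝ) : Prop :=
  ∫ ω, Y (D ω) (D' ω) ω ∂μ = b0 + b1 * ∫ ω, bInd (D ω) ∂μ + b2 * ∫ ω, bInd (D' ω) ∂μ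
    + b3 * ∫ ω, bInd (D ω) * bInd (D' ω) ∂μ

namespace MomentCondition

variable {Ω : Type*} [MeasurableSpace Ω] {μ : Measure Ω} {Y : Bool → Bool → Ω → ℝ}
  {D D' E E' : Ω → Bool} {b0 b1 b2 b3 : ℝ}

lemma congr_ae (h : MomentCondition μ Y D D' b0 b1 b2 b3) (hD : D =ᵐ[μ] E) (hD' : D' =ᵐ[μ] E') :
    MomentCondition μ Y E E' b0 b1 b2 b3 := by
  have hcongr (F : Bool → Bool → Ω → ℝ) :
      ∫ ω, F (D ω) (D' ω) ω ∂μ = ∫ ω, F (E ω) (E' ω) ω ∂μ :=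
    integral_congr_ae <| by filter_upwards [hD, hD'] with ω h h'; rw [h, h']
  unfold MomentCondition at *
  rwa [hcongr Y, hcongr (fun d _ _ => bInd d), hcongr (fun _ d' _ => bInd d'),
    hcongr (fun d d' _ => bInd d * bInd d')] at h

lemma integral_false_false
    (h : MomentCondition μ Y (fun _ => false) (fun _ => false) b0 b1 b2 b3) :
    ∫ ω, Y false false ω ∂μ = b0 := by
  simpa [MomentCondition, bInd] using h

lemma integral_right_false (h : MomentCondition μ Y D (fun _ => false) b0 b1 b2 b3) :
    ∫ ω, Y (D ω) false ω ∂μ = b0 + b1 * ∫ ω, bInd (D ω) ∂μ := by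
  simpa [MomentCondition, bInd] using h

lemma integral_left_false (h : MomentCondition μ Y (fun _ => false) D b0 b1 b2 b3) :
    ∫ ω, Y false (D ω) ω ∂μ = b0 + b2 * ∫ ω, bInd (D ω) ∂μ := by
  simpa [MomentCondition, bInd] using h

lemma of_cond_cell {P : Measure Ω} [IsFiniteMeasure P] {Di Dj : Bool → Bool → Ω → Bool}
    {Zi Zj : Ω → Bool} (hYmeas : ∀ d d', Measurable (Y d d'))
    (hDimeas : ∀ z z', Measurable (Di z z')) (hDjmeas : ∀ z z', Measurable (Dj z z'))
    (hZi : Measurable Zi) (hZj : Measurable Zj)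
    (hIV : IndepFun
      (fun ω => ((fun d d' => Y d d' ω), (fun z z' => Di z z' ω), (fun z z' => Dj z z' ω)))
      (fun ω => (Zi ω, Zj ω)) P)
    {z z' : Bool} (hcell : P ({x | Zi x = z} ∩ {x | Zj x = z'}) ≠ 0)
    (h : MomentCondition (P[|{x | Zi x = z} ∩ {x | Zj x = z'}]) Y
      (fun ω => Di (Zi ω) (Zj ω) ω) (fun ω => Dj (Zj ω) (Zi ω) ω) b0 b1 b2 b3) :
    MomentCondition P Y (Di z z') (Dj z' z) b0 b1 b2 b3 := by
  have hcell_eq : {x | Zi x = z} ∩ {x | Zj x = z'} = (fun ω => (Zi ω, Zj ω)) ⁻¹' {(z, z')} := by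
    ext; simp
  rw [hcell_eq] at hcell h
  have hX : Measurable
      (fun ω => ((fun d d' => Y d d' ω), (fun z z' => Di z z' ω), (fun z z' => Dj z z' ω))) := by
    fun_prop
  have key := hIV.integral_comp_cond_preimage_singleton hX (by fun_prop) hcell
  unfold MomentCondition at h ⊢
  -- each integrand is `Φ (Zi ω, Zj ω)` evaluated at the potential variables
  rwa [key (fun zz p => p.1 (p.2.1 zz.1 zz.2) (p.2.2 zz.2 zz.1))
      (Measurable.apply_apply_of_countable measurable_fst (by fun_prop) (by fun_prop)),
    key (fun zz p => bInd (p.2.1 zz.1 zz.2)) (by fun_prop),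
    key (fun zz p => bInd (p.2.2 zz.2 zz.1)) (by fun_prop),
    key (fun zz p => bInd (p.2.1 zz.1 zz.2) * bInd (p.2.2 zz.2 zz.1)) (by fun_prop)] at h

end MomentCondition

theorem stmt_13_general
    {Ω : Type*} [MeasurableSpace Ω] (P : Measure Ω) [IsProbabilityMeasure P]
    (Y : Bool → Bool → Ω → ℝ) (Di Dj : Bool → Bool → Ω → Bool)
    (Zi Zj : Ω → Bool)
    (hYmeas : ∀ d d', Measurable (Y d d'))
    (hYint : ∀ d d', Integrable (Y d d') P)
    (hDimeas : ∀ z z', Measurable (Di z z'))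
    (hDjmeas : ∀ z z', Measurable (Dj z z'))
    (hZi : Measurable Zi) (hZj : Measurable Zj)
    (hpos : ∀ z z', 0 < P ({x | Zi x = z} ∩ {x | Zj x = z'}))
    (hIV : IndepFun
      (fun ω => ((fun d d' => Y d d' ω),
                 (fun z z' => Di z z' ω),
                 (fun z z' => Dj z z' ω)))
      (fun ω => (Zi ω, Zj ω)) P)
    (hosn : ∀ᵐ ω ∂P,
      Di false false ω = false ∧ Di false true ω = false ∧
      Dj false false ω = false ∧ Dj false true ω = false)
    (b0 b1 b2 b3 : ℝ)
    (h2sls : ∀ z z', (∫ ω, (Y (Di (Zi ω) (Zj ω) ω) (Dj (Zj ω) (Zi ω) ω) ω) ∂(P[|({x | Zi x = z} ∩ {x | Zj x = z'})])) = b0 + b1 * (∫ ω, bInd (Di (Zi ω) (Zj ω) ω) ∂(P[|({x | Zi x = z} ∩ {x | Zj x = z'})])) + b2 * (∫ ω, bInd (Dj (Zj ω) (Zi ω) ω) ∂(P[|({x | Zi x = z} ∩ {x | Zj x = z'})])) + b3 * (∫ ω, bInd (Di (Zi ω) (Zj ω) ω) * bInd (Dj (Zj ω) (Zi ω) ω)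 ∂(P[|({x | Zi x = z} ∩ {x | Zj x = z'})])))
    (hCi : 0 < P ({x | Di true false x = true ∧ Di false true x = false})) (hCj : 0 < P ({x | Dj true false x = true ∧ Dj false true x = false}))
    :
    b0 = (∫ ω, Y false false ω ∂P)
    ∧ b1 = (∫ ω, (Y true false ω - Y false false ω) ∂(P[|{x | Di true false x = true ∧ Di false true x = false}]))
    ∧ b2 = (∫ ω, (Y false true ω - Y false false ω) ∂(P[|{x | Dj true false x = true ∧ Dj false true x = false}])) := by
  have hcell (z z' : Bool) : MomentCondition P Y (Di z z') (Dj z' z) b0 b1 b2 b3 :=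
    .of_cond_cell hYmeas hDimeas hDjmeas hZi hZj hIV (hpos z z').ne' (h2sls z z')
  have hDi00 : Di false false =ᵐ[P] fun _ => false := hosn.mono fun _ h => h.1
  have hDi01 : Di false true =ᵐ[P] fun _ => false := hosn.mono fun _ h => h.2.1
  have hDj00 : Dj false false =ᵐ[P] fun _ => false := hosn.mono fun _ h => h.2.2.1
  have hDj01 : Dj false true =ᵐ[P] fun _ => false := hosn.mono fun _ h => h.2.2.2
  have hb0 : b0 = ∫ ω, Y false false ω ∂P :=
    ((hcell false false).congr_ae hDi00 hDj00).integral_false_false.symm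
  have hCi' := setOf_and_eq_false_ae_eq (D := Di true false) hDi01
  have hCj' := setOf_and_eq_false_ae_eq (D := Dj true false) hDj01
  refine ⟨hb0, ?_, ?_⟩
  · rw [cond_congr_ae hCi']
    refine eq_integral_cond_sub_of_integral_eq (Y := fun d => Y d false) (fun d => hYint d false)
      (hDimeas true false) (measure_congr hCi' ▸ hCi.ne') ?_
    rw [← hb0]
    exact ((hcell true false).congr_ae .rfl hDj01).integral_right_false
  · rw [cond_congr_ae hCj']
    refine eq_integral_cond_sub_of_integral_eq (Y := fun d => Y false d) (fun d => hYint false d)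
      (hDjmeas true false) (measure_congr hCj' ▸ hCj.ne') ?_
    rw [← hb0]
    exact ((hcell false true).congr_ae hDi01 .rfl).integral_left_false

theorem stmt_13
    {Ω : Type*} [MeasurableSpace Ω] (P : Measure Ω) [IsProbabilityMeasure P]
    (Y : Bool → Bool → Ω → ℝ) (Di Dj : Bool → Bool → Ω → Bool)
    (Zi Zj : Ω → Bool)
    (hYmeas : ∀ d d', Measurable (Y d d'))
    (hYint : ∀ d d', Integrable (Y d d') P)
    (hDimeas : ∀ z z', Measurable (Di z z'))
    (hDjmeas : ∀ z z', Measurable (Dj z z'))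
    (hZi : Measurable Zi) (hZj : Measurable Zj)
    (hpos : ∀ z z', 0 < P ({x | Zi x = z} ∩ {x | Zj x = z'}))
    (hIV : IndepFun
      (fun ω => ((fun d d' => Y d d' ω),
                 (fun z z' => Di z z' ω),
                 (fun z z' => Dj z z' ω)))
      (fun ω => (Zi ω, Zj ω)) P)
    (hmono : ∀ᵐ ω ∂P,
      (Di false false ω ≤ Di false true ω ∧ Di false true ω ≤ Di true false ω ∧
        Di true false ω ≤ Di true true ω) ∧
      (Dj false false ω ≤ Dj false true ω ∧ Dj false true ω ≤ Dj true false ω ∧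
        Dj true false ω ≤ Dj true true ω))
    (hosn : ∀ᵐ ω ∂P,
      Di false false ω = false ∧ Di false true ω = false ∧
      Dj false false ω = false ∧ Dj false true ω = false)
    (b0 b1 b2 b3 : ℝ)
    (h2sls : ∀ z z', (∫ ω, (Y (Di (Zi ω) (Zj ω) ω) (Dj (Zj ω) (Zi ω) ω) ω) ∂(P[|({x | Zi x = z} ∩ {x | Zj x = z'})])) = b0 + b1 * (∫ ω, bInd (Di (Zi ω) (Zj ω) ω) ∂(P[|({x | Zi x = z} ∩ {x | Zj x = z'})])) + b2 * (∫ ω, bInd (Dj (Zj ω) (Zi ω) ω) ∂(P[|({x | Zi x = z} ∩ {x | Zj x = z'})])) + b3 * (∫ ω, bInd (Di (Zi ω) (Zj ω) ω) * bInd (Dj (Zj ω) (Zi ω) ω) ∂(P[|({x | Zi x = z} ∩ {x | Zj x = z'})])))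
    (hCi : 0 < P ({x | Di true false x = true ∧ Di false true x = false})) (hCj : 0 < P ({x | Dj true false x = true ∧ Dj false true x = false}))
    :
    b0 = (∫ ω, Y false false ω ∂P)
    ∧ b1 = (∫ ω, (Y true false ω - Y false false ω) ∂(P[|{x | Di true false x = true ∧ Di false true x = false}]))
    ∧ b2 = (∫ ω, (Y false true ω - Y false false ω) ∂(P[|{x | Dj true false x = true ∧ Dj false true x = false}])) :=
  stmt_13_general P Y Di Dj Zi Zj hYmeas hYint hDimeas hDjmeas hZi hZj hpos hIV hosn b0 b1 b2 b3
    h2sls hCi hCj
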